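/- arXiv:1409.7926 — 8 statements merged into one kernel-verified Lean document; each statement's English description precedes it below -/
import Mathlib

section
/- Suppose the menu (t_L, x_L, t_H, x_H) satisfies IC-1, IC-2, IR-1, IR-2, that Û(x_L, θ_L) ≤ Û(x_L, θ_H), and that IR-1 is slack, i.e. ε := Û(x_L, θ_L) − t_L > 0. Then the menu (t_L + ε, x_L, t_H + ε, x_H) also satisfies IC-1, IC-2, IR-1 and IR-2, and yields strictly larger expected profit: Π(t_L + ε, x_L, t_H + ε, x_H) > Π(t_L, x_L, t_H, x_H). Consequently, at any profit-maximizing feasible menu the constraint IR-1 binds: Û(x_L, θ_L) = t_L. -/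
/-- Feasibility of a menu `(tL, xL, tH, xH)` in the two-type screening model:
IC-1, IC-2, IR-1, IR-2. -/
def Feasible (Uhat : ℝ → ℝ → ℝ) (θL θH tL xL tH xH : ℝ) : Prop :=
  (Uhat xH θH - tH ≥ Uhat xL θH - tL) ∧   -- IC-1
  (Uhat xL θL - tL ≥ Uhat xH θL - tH) ∧   -- IC-2
  (Uhat xL θL - tL ≥ 0) ∧                 -- IR-1
  (Uhat xH θH - tH ≥ 0)                   -- IR-2

/-- Expected profit of the utility company. -/
def Profit (g : ℝ → ℝ) (p tL xL tH xH : ℝ) : ℝ :=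
  (1 - p) * (tL - g xL) + p * (tH - g xH)

/-- If IR-1 is slack, raising both prices by the slack `ε` preserves feasibility and
strictly increases profit; consequently at any profit-maximizing feasible menu IR-1 binds. -/
theorem stmt_0 (Uhat : ℝ → ℝ → ℝ) (g : ℝ → ℝ) (p θL θH tL xL tH xH : ℝ)
    (hθ : θL < θH) (hp0 : 0 < p) (hp1 : p < 1)
    (hfeas : Feasible Uhat θL θH tL xL tH xH)
    (hmono : Uhat xL θL ≤ Uhat xL θH) :
    (0 < Uhat xL θL - tL →
      Feasible Uhat θL θH (tL + (Uhat xL θL - tL)) xL (tH + (Uhat xL θL - tL)) xH ∧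
      Profit g p (tL + (Uhat xL θL - tL)) xL (tH + (Uhat xL θL - tL)) xH >
        Profit g p tL xL tH xH) ∧
    ((∀ tL' xL' tH' xH', Feasible Uhat θL θH tL' xL' tH' xH' →
        Profit g p tL' xL' tH' xH' ≤ Profit g p tL xL tH xH) →
      Uhat xL θL = tL) := by
  obtain ⟨ic1, ic2, ir1, ir2⟩ := hfeas
  have key : 0 < Uhat xL θL - tL →
      Feasible Uhat θL θH (tL + (Uhat xL θL - tL)) xL (tH + (Uhat xL θL - tL)) xH ∧
      Profit g p (tL + (Uhat xL θL - tL)) xL (tH + (Uhat xL θL - tL)) xH >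
        Profit g p tL xL tH xH := by
    intro hε
    constructor
    · refine ⟨by linarith, by linarith, by linarith, by linarith⟩
    · simp only [Profit]; nlinarith
  refine ⟨key, fun hmax => ?_⟩
  by_contra h
  have hε : 0 < Uhat xL θL - tL := lt_of_le_of_ne ir1 (by intro h'; exact h (by linarith))
  obtain ⟨hf, hprof⟩ := key hε
  exact absurd (hmax _ _ _ _ hf) (not_le.mpr hprof)
end

section
/- Suppose the menu (t_L, x_L, t_H, x_H) satisfies IC-1, IC-2, IR-1, IR-2, that Û(x_L, θ_L) ≤ Û(x_L, θ_H), that IR-1 binds (t_L = Û(x_L, θ_L)), and that IC-1 is slack, i.e. ε := (Û(x_H, θ_H) − t_H) − (Û(x_L, θ_H) − t_L) > 0. Then the menu (t_L, x_L, t_H + ε, x_H) satisfies IC-1, IC-2, IR-1 and IR-2, and yields strictly larger expected profit: Π(t_L, x_L, t_H + ε, x_H) > Π(t_L, x_L, t_H, x_H). Consequently, at any profit-maximizing feasible menu with binding IR-1, the constraint IC-1 binds: t_H − t_L = Û(x_H, θ_H) − Û(x_L, θ_H). -/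
/-- If IR-1 binds and IC-1 is slack, raising the high price by the slack `ε` preserves
feasibility and strictly increases profit; consequently at any profit-maximizing feasible
menu with binding IR-1, the constraint IC-1 binds. -/
theorem stmt_1 (Uhat : ℝ → ℝ → ℝ) (g : ℝ → ℝ) (p θL θH tL xL tH xH : ℝ)
    (hθ : θL < θH) (hp0 : 0 < p) (hp1 : p < 1)
    (hfeas : Feasible Uhat θL θH tL xL tH xH)
    (hmono : Uhat xL θL ≤ Uhat xL θH)
    (hbind : tL = Uhat xL θL) :
    (0 < (Uhat xH θH - tH) - (Uhat xL θH - tL) →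
      Feasible Uhat θL θH tL xL (tH + ((Uhat xH θH - tH) - (Uhat xL θH - tL))) xH ∧
      Profit g p tL xL (tH + ((Uhat xH θH - tH) - (Uhat xL θH - tL))) xH >
        Profit g p tL xL tH xH) ∧
    ((∀ tL' xL' tH' xH', Feasible Uhat θL θH tL' xL' tH' xH' →
        Profit g p tL' xL' tH' xH' ≤ Profit g p tL xL tH xH) →
      tH - tL = Uhat xH θH - Uhat xL θH) := by
  obtain ⟨h1, h2, h3, h4⟩ := hfeas
  have key : ∀ hε : 0 < (Uhat xH θH - tH) - (Uhat xL θH - tL),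
      Feasible Uhat θL θH tL xL (tH + ((Uhat xH θH - tH) - (Uhat xL θH - tL))) xH ∧
      Profit g p tL xL (tH + ((Uhat xH θH - tH) - (Uhat xL θH - tL))) xH >
        Profit g p tL xL tH xH := by
    intro hε
    refine ⟨⟨by linarith, by linarith, h3, by linarith⟩, ?_⟩
    simp only [Profit]
    nlinarith
  refine ⟨key, fun hmax => ?_⟩
  by_contra hne
  have hε : 0 < (Uhat xH θH - tH) - (Uhat xL θH - tL) := by
    rcases lt_or_eq_of_le (by linarith : Uhat xL θH - tL ≤ Uhat xH θH - tH) with h | h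
    · linarith
    · exact absurd (by linarith) hne
  obtain ⟨hf, hp⟩ := key hε
  exact absurd (hmax _ _ _ _ hf) (not_le.mpr hp)
end

section
/- Let p ∈ (0,1). Suppose x_L* satisfies the first-order condition d/dx[Û(x, θ_L) − (1−p) g(x) − p Û(x, θ_H)] = 0 at x_L*, and x_L† satisfies d/dx[Û(x, θ_L) − g(x)] = 0 at x_L†. Assume the derivative x ↦ d/dx[Û(x, θ_L) − g(x)] is strictly decreasing (strictly antitone) and the derivative sorting condition holds: ∂Û/∂x(x, θ_H) ≥ ∂Û/∂x(x, θ_L) for all x. Then x_L* ≤ x_L†: under asymmetric information the low type receives a quality level no greater than the first-best level. -/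
/-!
At the second-best point the first-order condition gives
`(1 - p) (Û'(·, θ_L) - g') = p (Û'(·, θ_H) - Û'(·, θ_L)) ≥ 0` by sorting. The first-best marginal
surplus `Û'(·, θ_L) - g'` is thus nonnegative at `x_L*` and zero at `x_L†`; being strictly
decreasing, it forces `x_L* ≤ x_L†`.
-/

theorem deriv_sub_mul_sub_mul {u g v : ℝ → ℝ} {x : ℝ} (a b : ℝ) (hu : DifferentiableAt ℝ u x)
    (hg : DifferentiableAt ℝ g x) (hv : DifferentiableAt ℝ v x) :
    deriv (fun y => u y - a * g y - b * v y) x = deriv u x - a * deriv g x - b * deriv v x :=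
  ((hu.hasDerivAt.sub (hg.hasDerivAt.const_mul a)).sub (hv.hasDerivAt.const_mul b)).deriv

theorem deriv_sub_nonneg_of_deriv_sub_mul_sub_mul_eq_zero {u g v : ℝ → ℝ} {p x : ℝ}
    (hu : DifferentiableAt ℝ u x) (hg : DifferentiableAt ℝ g x) (hv : DifferentiableAt ℝ v x)
    (hp0 : 0 ≤ p) (hp1 : p < 1)
    (hfoc : deriv (fun y => u y - (1 - p) * g y - p * v y) x = 0)
    (hsort : deriv u x ≤ deriv v x) :
    0 ≤ deriv (fun y => u y - g y) x := by
  rw [deriv_sub_mul_sub_mul _ _ hu hg hv] at hfoc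
  rw [(hu.hasDerivAt.fun_sub hg.hasDerivAt).deriv]
  have hsurplus : (1 - p) * (deriv u x - deriv g x) = p * (deriv v x - deriv u x) := by
    linear_combination hfoc
  exact nonneg_of_mul_nonneg_right (hsurplus ▸ mul_nonneg hp0 (sub_nonneg.2 hsort))
    (sub_pos.2 hp1)

theorem stmt_6_general (Uhat : ℝ → ℝ → ℝ) (g : ℝ → ℝ) (p θL θH xLs xLd : ℝ)
    (hp0 : 0 < p) (hp1 : p < 1)
    (hdiffL : Differentiable ℝ (fun x => Uhat x θL))
    (hdiffH : Differentiable ℝ (fun x => Uhat x θH))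
    (hdiffg : Differentiable ℝ g)
    (hfocS : deriv (fun x => Uhat x θL - (1 - p) * g x - p * Uhat x θH) xLs = 0)
    (hfocF : deriv (fun x => Uhat x θL - g x) xLd = 0)
    (hanti : StrictAnti (fun x => deriv (fun y => Uhat y θL - g y) x))
    (hsort : ∀ x : ℝ, deriv (fun y => Uhat y θL) x ≤ deriv (fun y => Uhat y θH) x) :
    xLs ≤ xLd := by
  have hsurplus : 0 ≤ deriv (fun y => Uhat y θL - g y) xLs :=
    deriv_sub_nonneg_of_deriv_sub_mul_sub_mul_eq_zero (hdiffL xLs) (hdiffg xLs) (hdiffH xLs)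
      hp0.le hp1 hfocS (hsort xLs)
  exact hanti.le_iff_ge.mp (hfocF ▸ hsurplus)

/-- Under asymmetric information the low type receives a quality level no greater than
the first-best level. -/
theorem stmt_6 (Uhat : ℝ → ℝ → ℝ) (g : ℝ → ℝ) (p θL θH xLs xLd : ℝ)
    (hθ : θL < θH) (hp0 : 0 < p) (hp1 : p < 1)
    (hdiffL : Differentiable ℝ (fun x => Uhat x θL))
    (hdiffH : Differentiable ℝ (fun x => Uhat x θH))
    (hdiffg : Differentiable ℝ g)
    (hfocS : deriv (fun x => Uhat x θL - (1 - p) * g x - p * Uhat x θH) xLs = 0)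
    (hfocF : deriv (fun x => Uhat x θL - g x) xLd = 0)
    (hanti : StrictAnti (fun x => deriv (fun y => Uhat y θL - g y) x))
    (hsort : ∀ x : ℝ, deriv (fun y => Uhat y θL) x ≤ deriv (fun y => Uhat y θH) x) :
    xLs ≤ xLd :=
  stmt_6_general Uhat g p θL θH xLs xLd hp0 hp1 hdiffL hdiffH hdiffg hfocS hfocF hanti hsort
end

section
/- (Proposition 1.) Let F(x) = Û(x, θ_H) − g(x) and G(x) = U(x, θ_H) − g(x) = F(x) − (1 − η(x)) ℓ(θ_H). Suppose F and η are differentiable, the derivative F' is strictly decreasing (strictly antitone), η'(x) > 0 for all x, and ℓ(θ_H) ≥ 0. If x̂_H* satisfies F'(x̂_H*) = 0 and x_H* satisfies G'(x_H*) = 0, then x_H* ≥ x̂_H*: the privacy setting of the high-type agent is higher in the contract with loss risk. This holds independently of the population distribution p and of the low type θ_L. -/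
/-- Proposition 1: the privacy setting of the high-type agent is higher in the contract
with loss risk, independently of the population distribution and of the low type. -/
theorem stmt_7 (F G η : ℝ → ℝ) (ℓH xHhat xHs : ℝ)
    (hG : ∀ x, G x = F x - (1 - η x) * ℓH)
    (hFdiff : Differentiable ℝ F)
    (hηdiff : Differentiable ℝ η)
    (hanti : StrictAnti (fun x => deriv F x))
    (hη' : ∀ x, 0 < deriv η x)
    (hℓ : 0 ≤ ℓH)
    (hfocF : deriv F xHhat = 0)
    (hfocG : deriv G xHs = 0) :
    xHs ≥ xHhat := by
  have hGfun : G = fun x => F x - (1 - η x) * ℓH := funext hG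
  have hderivG : deriv G xHs = deriv F xHs + deriv η xHs * ℓH := by
    rw [hGfun]
    have h1 : HasDerivAt F (deriv F xHs) xHs := (hFdiff xHs).hasDerivAt
    have h2 : HasDerivAt η (deriv η xHs) xHs := (hηdiff xHs).hasDerivAt
    have : HasDerivAt (fun x => F x - (1 - η x) * ℓH)
        (deriv F xHs - (0 - deriv η xHs) * ℓH) xHs :=
      h1.sub (((hasDerivAt_const xHs (1:ℝ)).sub h2).mul_const ℓH)
    rw [this.deriv]; ring
  have hle : deriv F xHs ≤ deriv F xHhat := by
    rw [hfocF]
    have := mul_nonneg (hη' xHs).le hℓ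
    linarith [hderivG ▸ hfocG]
  by_contra h
  push_neg at h
  exact absurd hle (not_le.mpr (hanti h))
end

section
/- (Proposition 2.) Let p ∈ (0,1). Define φ(x) = Û(x, θ_L) − p Û(x, θ_H) − (1−p) g(x) and ψ(x) = U(x, θ_L) − p U(x, θ_H) − (1−p) g(x), so that ψ(x) = φ(x) − (1 − η(x))(ℓ(θ_L) − p ℓ(θ_H)). Suppose φ, ψ, η are differentiable, φ' is strictly decreasing (strictly antitone), and η'(x) > 0 for all x. If x̂_L* satisfies φ'(x̂_L*) = 0 and x_L* satisfies ψ'(x_L*) = 0, then: (i) if ℓ(θ_L) − p ℓ(θ_H) ≥ 0 (i.e., p ≤ p̄ := ℓ(θ_L)/ℓ(θ_H)) then x_L* ≥ x̂_L*; (ii) if ℓ(θ_L) − p ℓ(θ_H) < 0 (i.e., p > p̄) then x_L* < x̂_L*. -/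
/-! The loss term shifts the first-order condition: at `x_L*` one has
`φ'(x_L*) = -η'(x_L*) (ℓ_L - p ℓ_H)`, whose sign is opposite to that of `ℓ_L - p ℓ_H`.
Since `φ'` is strictly decreasing and vanishes at `x̂_L*`, that sign places `x_L*` relative to `x̂_L*`. -/

theorem HasDerivAt.sub_one_sub_mul_const {φ η : ℝ → ℝ} {φ' η' x : ℝ} (c : ℝ)
    (hφ : HasDerivAt φ φ' x) (hη : HasDerivAt η η' x) :
    HasDerivAt (fun y => φ y - (1 - η y) * c) (φ' + η' * c) x := by
  refine (hφ.sub (((hasDerivAt_const x 1).sub hη).mul_const c)).congr_deriv ?_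
  ring

theorem deriv_eq_neg_mul_of_deriv_sub_one_sub_mul_eq_zero {φ η : ℝ → ℝ} {x : ℝ} (c : ℝ)
    (hφ : DifferentiableAt ℝ φ x) (hη : DifferentiableAt ℝ η x)
    (hfoc : deriv (fun y => φ y - (1 - η y) * c) x = 0) :
    deriv φ x = -(deriv η x * c) := by
  rw [(hφ.hasDerivAt.sub_one_sub_mul_const c hη.hasDerivAt).deriv] at hfoc
  linarith

theorem stmt_8_general (φ ψ η : ℝ → ℝ) (p ℓL ℓH xLhat xLs : ℝ)
    (hψ : ∀ x, ψ x = φ x - (1 - η x) * (ℓL - p * ℓH))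
    (hφdiff : Differentiable ℝ φ)
    (hanti : StrictAnti (fun x => deriv φ x))
    (hη' : ∀ x, 0 < deriv η x)
    (hfocφ : deriv φ xLhat = 0)
    (hfocψ : deriv ψ xLs = 0) :
    (0 ≤ ℓL - p * ℓH → xLs ≥ xLhat) ∧
    (ℓL - p * ℓH < 0 → xLs < xLhat) := by
  rw [funext hψ] at hfocψ
  have hφ'xLs := deriv_eq_neg_mul_of_deriv_sub_one_sub_mul_eq_zero _ (hφdiff xLs)
    (differentiableAt_of_deriv_ne_zero (hη' xLs).ne') hfocψ
  constructor
  · intro hc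
    refine hanti.le_iff_ge.mp ?_
    rw [hfocφ, hφ'xLs, neg_nonpos]
    exact mul_nonneg (hη' xLs).le hc
  · intro hc
    refine hanti.lt_iff_gt.mp ?_
    rw [hfocφ, hφ'xLs, neg_pos]
    exact mul_neg_of_pos_of_neg (hη' xLs) hc

/-- Proposition 2: comparison of the low-type privacy settings with and without loss risk,
depending on the sign of `ℓ(θL) − p ℓ(θH)`. -/
theorem stmt_8 (φ ψ η : ℝ → ℝ) (p ℓL ℓH xLhat xLs : ℝ)
    (hp0 : 0 < p) (hp1 : p < 1)
    (hψ : ∀ x, ψ x = φ x - (1 - η x) * (ℓL - p * ℓH))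
    (hφdiff : Differentiable ℝ φ)
    (hηdiff : Differentiable ℝ η)
    (hanti : StrictAnti (fun x => deriv φ x))
    (hη' : ∀ x, 0 < deriv η x)
    (hfocφ : deriv φ xLhat = 0)
    (hfocψ : deriv ψ xLs = 0) :
    (0 ≤ ℓL - p * ℓH → xLs ≥ xLhat) ∧
    (ℓL - p * ℓH < 0 → xLs < xLhat) :=
  stmt_8_general φ ψ η p ℓL ℓH xLhat xLs hψ hφdiff hanti hη' hfocφ hfocψ
end

section
/- (Proposition 3.) Let 0 < p < p̂ < 1. For q ∈ {p, p̂} define f(x, q) = U(x, θ_L) − q U(x, θ_H) − (1−q) g(x), and suppose x_L*(p) satisfies ∂f/∂x(x_L*(p), p) = 0 and x_L*(p̂) satisfies ∂f/∂x(x_L*(p̂), p̂) = 0. Assume x ↦ ∂f/∂x(x, p̂) is strictly decreasing (strictly antitone), and that d/dx[U(x, θ_H) − g(x)] evaluated at x_L*(p) is strictly positive. Then x_L*(p) > x_L*(p̂): the optimal privacy setting of the low type is decreasing in the fraction p of high types. -/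
/-
Writing `D_q(x) = (U_L - q U_H - (1 - q) g)'(x)`, the derivative is affine in `q`:
`D_q̂ = D_p - (q̂ - p) (U_H - g)'`. At `x_L*(p)` the first-order condition `D_p = 0` and
`(U_H - g)' > 0` give `D_q̂(x_L*(p)) < 0 = D_q̂(x_L*(q̂))`, and since `D_q̂` is strictly
decreasing this forces `x_L*(p) > x_L*(q̂)`.
-/

section ScreeningObjective

variable {a b c : ℝ → ℝ} {x : ℝ}

theorem deriv_sub_mul_sub_one_sub_mul (ha : DifferentiableAt ℝ a x)
    (hb : DifferentiableAt ℝ b x) (hc : DifferentiableAt ℝ c x) (q : ℝ) :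
    deriv (fun y => a y - q * b y - (1 - q) * c y) x =
      deriv (fun y => a y - c y) x - q * deriv (fun y => b y - c y) x := by
  rw [((ha.hasDerivAt.fun_sub (hb.hasDerivAt.const_mul q)).fun_sub
      (hc.hasDerivAt.const_mul (1 - q))).deriv, deriv_fun_sub ha hc, deriv_fun_sub hb hc]
  ring

theorem deriv_sub_mul_sub_one_sub_mul_eq_sub (ha : DifferentiableAt ℝ a x)
    (hb : DifferentiableAt ℝ b x) (hc : DifferentiableAt ℝ c x) (p q : ℝ) :
    deriv (fun y => a y - q * b y - (1 - q) * c y) x =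
      deriv (fun y => a y - p * b y - (1 - p) * c y) x -
        (q - p) * deriv (fun y => b y - c y) x := by
  rw [deriv_sub_mul_sub_one_sub_mul ha hb hc, deriv_sub_mul_sub_one_sub_mul ha hb hc]
  ring

end ScreeningObjective

theorem stmt_10_general (U : ℝ → ℝ → ℝ) (g : ℝ → ℝ) (f : ℝ → ℝ → ℝ)
    (θL θH p phat xLp xLphat : ℝ)
    (hpp : p < phat)
    (hf : ∀ x q, f x q = U x θL - q * U x θH - (1 - q) * g x)
    (hdiffL : Differentiable ℝ (fun x => U x θL))
    (hdiffH : Differentiable ℝ (fun x => U x θH))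
    (hdiffg : Differentiable ℝ g)
    (hfocp : deriv (fun x => f x p) xLp = 0)
    (hfocphat : deriv (fun x => f x phat) xLphat = 0)
    (hanti : StrictAnti (fun x => deriv (fun y => f y phat) x))
    (hpos : 0 < deriv (fun x => U x θH - g x) xLp) :
    xLp > xLphat := by
  obtain rfl : f = fun x q => U x θL - q * U x θH - (1 - q) * g x :=
    funext fun x => funext (hf x)
  have hshift :=
    deriv_sub_mul_sub_one_sub_mul_eq_sub (hdiffL xLp) (hdiffH xLp) (hdiffg xLp) p phat
  have hneg : deriv (fun y => U y θL - phat * U y θH - (1 - phat) * g y) xLp < 0 := by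
    rw [hshift, hfocp, zero_sub, neg_lt_zero]
    exact mul_pos (sub_pos.mpr hpp) hpos
  exact hanti.lt_iff_gt.mp (hfocphat ▸ hneg)

/-- Proposition 3: the optimal privacy setting of the low type is decreasing in the
fraction `p` of high types. -/
theorem stmt_10 (U : ℝ → ℝ → ℝ) (g : ℝ → ℝ) (f : ℝ → ℝ → ℝ)
    (θL θH p phat xLp xLphat : ℝ)
    (hθ : θL < θH) (hp0 : 0 < p) (hpp : p < phat) (hp1 : phat < 1)
    (hf : ∀ x q, f x q = U x θL - q * U x θH - (1 - q) * g x)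
    (hdiffL : Differentiable ℝ (fun x => U x θL))
    (hdiffH : Differentiable ℝ (fun x => U x θH))
    (hdiffg : Differentiable ℝ g)
    (hfocp : deriv (fun x => f x p) xLp = 0)
    (hfocphat : deriv (fun x => f x phat) xLphat = 0)
    (hanti : StrictAnti (fun x => deriv (fun y => f y phat) x))
    (hpos : 0 < deriv (fun x => U x θH - g x) xLp) :
    xLp > xLphat :=
  stmt_10_general U g f θL θH p phat xLp xLphat hpp hf hdiffL hdiffH hdiffg hfocp hfocphat hanti
    hpos
end

section
/- (Proposition 4, part iii.) Suppose the high-type prices are t_H* = U(x_H*, θ_H) − U(x_L*, θ_H) + U(x_L*, θ_L) and t̂_H* = Û(x̂_H*, θ_H) − Û(x̂_L*, θ_H) + Û(x̂_L*, θ_L). Assume x_H* ≥ x̂_H*, x_L* < x̂_L* (as holds when p > p̄ = ℓ(θ_L)/ℓ(θ H)), that x ↦ Û(x, θ_H) is increasing, the sorting condition holds (x ↦ Û(x, θ_H) − Û(x, θ_L) is monotone increasing), and (η(x_H*) − η(x_L*)) ℓ(θ_H) > (1 − η(x_L*)) ℓ(θ_L) (equivalently, 1 − (1−η(x_H*))/(1−η(x_L*))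 > p̄). Then t_H* > t̂_H*. -/
/-- Proposition 4 (iii): comparison of the high-type prices with and without loss risk. -/
theorem stmt_13 (U Uhat : ℝ → ℝ → ℝ) (η ℓ : ℝ → ℝ)
    (θL θH xLs xHs xLhat xHhat tHs tHhat : ℝ)
    (hθ : θL < θH)
    (hU : ∀ x θ, U x θ = Uhat x θ - (1 - η x) * ℓ θ)
    (htH : tHs = U xHs θH - U xLs θH + U xLs θL)
    (htHhat : tHhat = Uhat xHhat θH - Uhat xLhat θH + Uhat xLhat θL)
    (hxH : xHs ≥ xHhat)
    (hxL : xLs < xLhat)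
    (hmonoH : Monotone (fun x => Uhat x θH))
    (hsort : Monotone (fun x => Uhat x θH - Uhat x θL))
    (hrisk : (η xHs - η xLs) * ℓ θH > (1 - η xLs) * ℓ θL) :
    tHs > tHhat := by
  have h1 : Uhat xHhat θH ≤ Uhat xHs θH := hmonoH hxH
  have h2 : Uhat xLs θH - Uhat xLs θL ≤ Uhat xLhat θH - Uhat xLhat θL := hsort hxL.le
  simp only [hU] at htH
  nlinarith [htH, htHhat]
end

section
/- (Proposition 5.) Suppose x_L* < x̂_L* (as holds when p > p̄ = ℓ(θ_L)/ℓ(θ_H)), ℓ(θ_L) < ℓ(θ_H), η(x_L*) < 1, and the sorting condition holds (x ↦ Û(x, θ_H) − Û(x, θ_L) is monotone increasing). Then the information rent under the optimal contract without loss risk is strictly higher than under the optimal contract with loss risk: Û(x̂_L*, θ_H) − Û(x̂_L*, θ_L) > U(x_L*, θ_H) − U(x_L*, θ_L). -/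
/-- Proposition 5: if `p > p̄`, the information rent without loss risk is strictly higher
than with loss risk. -/
theorem stmt_14 (U Uhat : ℝ → ℝ → ℝ) (η ℓ : ℝ → ℝ) (θL θH xLs xLhat : ℝ)
    (hθ : θL < θH)
    (hU : ∀ x θ, U x θ = Uhat x θ - (1 - η x) * ℓ θ)
    (hx : xLs < xLhat)
    (hℓ : ℓ θL < ℓ θH)
    (hη : η xLs < 1)
    (hsort : Monotone (fun x => Uhat x θH - Uhat x θL)) :
    Uhat xLhat θH - Uhat xLhat θL > U xLs θH - U xLs θL := by
  have h1 := hsort hx.le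
  simp only at h1
  have h2 : (1 - η xLs) * ℓ θL < (1 - η xLs) * ℓ θH :=
    mul_lt_mul_of_pos_left hℓ (by linarith)
  rw [hU, hU]
  linarith
end
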